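/- Let (Ω, 𝔉, P) be a probability space, (τ_N) positive with τ_N → 0, η̃ > 0, q : S → ℝ bounded, b⁻, b⁺ : S → ℝ with inf_{s ∈ S}(b⁺(s) − b⁻(s)) > 0, and μ̂_N : Ω → (S → ℝ) arbitrary maps; write G_N(ω, s) = (μ̂_N(ω, s) − μ(s))/(τ_N·σ(s)). Assume: (i) there exist K > 0 and maps Z_N : Ω → (S → ℝ) such that for every ω, every N, every c ∈ {b⁻, b⁺} and every s with |μ(s) − c(s)| > η̃: (μ̂_N(ω, s) − c(s))·sgn(μ(s) − c(s)) ≥ σ(s)·(K + Z_N(ω, s)), and for every ε > 0 there is M > 0 with liminf_N P_*({ω : Z_N(ω, s)/τ_N ≥ −M for all s ∈ S}) ≥ 1 − ε; (ii) for every ε > 0 there is M > 0 with liminf_N P_*({ω : G_N(ω, s) ≥ −M for all s with |μ(s) − b⁻(s)| ≤ η̃}) ≥ 1 − ε; (iii) for every ε > 0 there is M > 0 with liminf_N P_*({ω : G_N(ω, s) ≤ M for all s with |μ(s) − b⁺(s)| ≤ η̃}) ≥ 1 − ε. Then limsup_N P*({ω : ∃ s ∈ S with μ(s) ≥ b⁺(s)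 and μ̂_N(ω, s) ≤ b⁻(s) + q(s)·τ_N·σ(s)}) = 0 and limsup_N P*({ω : ∃ s ∈ S with μ(s) ≤ b⁻(s) and μ̂_N(ω, s) ≥ b⁺(s) − q(s)·τ_N·σ(s)}) = 0. (Paper: Lemma lem:IntersectionCope.) -/
import Mathlib

open MeasureTheory Filter

/-- Outer probability of an arbitrary (not necessarily measurable) set. -/
noncomputable def outerProb {Ω : Type*} [MeasurableSpace Ω] (P : Measure Ω) (A : Set Ω) : ℝ :=
  (P A).toReal

/-- Inner probability of an arbitrary (not necessarily measurable) set. -/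
noncomputable def innerProb {Ω : Type*} [MeasurableSpace Ω] (P : Measure Ω) (A : Set Ω) : ℝ :=
  1 - (P Aᶜ).toReal

lemma innerProb_nonneg' {Ω : Type*} [MeasurableSpace Ω] (P : Measure Ω) [IsProbabilityMeasure P]
    (A : Set Ω) : 0 ≤ innerProb P A := by
  have h : (P Aᶜ).toReal ≤ 1 := by
    have h1 : P Aᶜ ≤ 1 := prob_le_one
    have := ENNReal.toReal_mono (by simp) h1
    simpa using this
  simp only [innerProb]; linarith

lemma innerProb_le_one' {Ω : Type*} [MeasurableSpace Ω] (P : Measure Ω)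
    (A : Set Ω) : innerProb P A ≤ 1 := by
  simp only [innerProb]
  have : 0 ≤ (P Aᶜ).toReal := ENNReal.toReal_nonneg
  linarith

lemma outer_le' {Ω : Type*} [MeasurableSpace Ω] (P : Measure Ω) [IsProbabilityMeasure P]
    {A G1 G2 : Set Ω} (h : A ⊆ G1ᶜ ∪ G2ᶜ) :
    outerProb P A ≤ (1 - innerProb P G1) + (1 - innerProb P G2) := by
  have h1 : P A ≤ P G1ᶜ + P G2ᶜ := (measure_mono h).trans (measure_union_le _ _)
  have h2 : (P A).toReal ≤ (P G1ᶜ).toReal + (P G2ᶜ).toReal := by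
    rw [← ENNReal.toReal_add (measure_ne_top _ _) (measure_ne_top _ _)]
    exact ENNReal.toReal_mono (by finiteness) h1
  simp only [outerProb, innerProb]
  linarith

lemma limsup_eq_zero_of_le' {f : ℕ → ℝ} (h0 : ∀ n, 0 ≤ f n)
    (h : ∀ ε > (0:ℝ), ∀ᶠ N in atTop, f N ≤ ε) : limsup f atTop = 0 := by
  have hbdd : IsBoundedUnder (· ≥ ·) atTop f := isBoundedUnder_of ⟨0, h0⟩
  have hcob : IsCoboundedUnder (· ≤ ·) atTop f := hbdd.isCoboundedUnder_le
  have hub : ∀ ε > (0:ℝ), limsup f atTop ≤ ε := fun ε hε => limsup_le_of_le hcob (h ε hε)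
  have hle : limsup f atTop ≤ 0 := le_of_forall_pos_le_add (by intro ε hε; simpa using hub ε hε)
  have hbd2 : IsBoundedUnder (· ≤ ·) atTop f := isBoundedUnder_of_eventually_le (h 1 one_pos)
  have hge : 0 ≤ limsup f atTop := le_limsup_of_frequently_le (Frequently.of_forall h0) hbd2
  linarith

set_option maxHeartbeats 1000000 in
/-- Lemma lem:IntersectionCope. -/
theorem intersection_cope
    {Ω : Type*} [MeasurableSpace Ω] (P : Measure Ω) [IsProbabilityMeasure P]
    {S : Type*} [MetricSpace S]
    (μ σ : S → ℝ) (o O : ℝ)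
    (ho : 0 < o) (hσo : ∀ s, o ≤ σ s) (hσO : ∀ s, σ s ≤ O)
    (hμbd : ∃ M, ∀ s, |μ s| ≤ M)
    (τ : ℕ → ℝ) (hτpos : ∀ N, 0 < τ N) (hτ0 : Tendsto τ atTop (nhds 0))
    (ηt : ℝ) (hηt : 0 < ηt)
    (q : S → ℝ) (hq : ∃ M, ∀ s, |q s| ≤ M)
    (bm bp : S → ℝ) (hgap : ∃ δ > (0 : ℝ), ∀ s, bm s + δ ≤ bp s)
    (μhat : ℕ → Ω → S → ℝ)
    (hfar : ∃ K > (0 : ℝ), ∃ Z : ℕ → Ω → S → ℝ,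
      (∀ ω N, ∀ c : S → ℝ, (c = bm ∨ c = bp) → ∀ s, ηt < |μ s - c s| →
        (μhat N ω s - c s) * Real.sign (μ s - c s) ≥ σ s * (K + Z N ω s)) ∧
      (∀ ε > (0 : ℝ), ∃ M > (0 : ℝ), (1 : ℝ) - ε ≤
        liminf (fun N => innerProb P {ω : Ω | ∀ s, Z N ω s / τ N ≥ -M}) atTop))
    (htightm : ∀ ε > (0 : ℝ), ∃ M > (0 : ℝ), (1 : ℝ) - ε ≤
      liminf (fun N => innerProb P {ω : Ω |
        ∀ s, |μ s - bm s| ≤ ηt → (μhat N ω s - μ s) / (τ N * σ s) ≥ -M}) atTop)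
    (htightp : ∀ ε > (0 : ℝ), ∃ M > (0 : ℝ), (1 : ℝ) - ε ≤
      liminf (fun N => innerProb P {ω : Ω |
        ∀ s, |μ s - bp s| ≤ ηt → (μhat N ω s - μ s) / (τ N * σ s) ≤ M}) atTop) :
    limsup (fun N => outerProb P {ω : Ω |
        ∃ s, μ s ≥ bp s ∧ μhat N ω s ≤ bm s + q s * τ N * σ s}) atTop = 0 ∧
    limsup (fun N => outerProb P {ω : Ω |
        ∃ s, μ s ≤ bm s ∧ μhat N ω s ≥ bp s - q s * τ N * σ s}) atTop = 0 := by
  obtain ⟨Q0, hQ0⟩ := hq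
  set Q : ℝ := max Q0 0 with hQdef
  have hQnn : 0 ≤ Q := le_max_right _ _
  have hqQ : ∀ s, |q s| ≤ Q := fun s => (hQ0 s).trans (le_max_left _ _)
  obtain ⟨δ, hδ, hgap'⟩ := hgap
  obtain ⟨K, hK, Z, hZ1, hZ2⟩ := hfar
  set O' : ℝ := max O o with hO'def
  have hO'pos : 0 < O' := lt_of_lt_of_le ho (le_max_right _ _)
  have hσO' : ∀ s, σ s ≤ O' := fun s => (hσO s).trans (le_max_left _ _)
  constructor
  · apply limsup_eq_zero_of_le' (fun N => ENNReal.toReal_nonneg)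
    intro ε hε
    obtain ⟨M1, hM1, hL1⟩ := hZ2 (ε/4) (by linarith)
    obtain ⟨M2, hM2, hL2⟩ := htightm (ε/4) (by linarith)
    set G1 : ℕ → Set Ω := fun N => {ω : Ω | ∀ s, Z N ω s / τ N ≥ -M1} with hG1def
    set G2 : ℕ → Set Ω := fun N => {ω : Ω |
        ∀ s, |μ s - bm s| ≤ ηt → (μhat N ω s - μ s) / (τ N * σ s) ≥ -M2} with hG2def
    have hcob1 : IsBoundedUnder (· ≥ ·) atTop (fun N => innerProb P (G1 N)) :=
      isBoundedUnder_of ⟨0, fun N => innerProb_nonneg' P _⟩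
    have hcob2 : IsBoundedUnder (· ≥ ·) atTop (fun N => innerProb P (G2 N)) :=
      isBoundedUnder_of ⟨0, fun N => innerProb_nonneg' P _⟩
    have hev1 : ∀ᶠ N in atTop, 1 - ε/2 < innerProb P (G1 N) :=
      eventually_lt_of_lt_liminf (lt_of_lt_of_le (by linarith) hL1) hcob1
    have hev2 : ∀ᶠ N in atTop, 1 - ε/2 < innerProb P (G2 N) :=
      eventually_lt_of_lt_liminf (lt_of_lt_of_le (by linarith) hL2) hcob2
    have hc1 : (0:ℝ) < K / (M1 + Q + 1) := by positivity
    have hc2 : (0:ℝ) < δ / ((M2 + Q + 1) * O') := by positivity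
    have hτev : ∀ᶠ N in atTop, τ N < min (K / (M1 + Q + 1)) (δ / ((M2 + Q + 1) * O')) :=
      hτ0.eventually_lt_const (lt_min hc1 hc2)
    filter_upwards [hev1, hev2, hτev] with N h1 h2 h3
    have hsub' : G1 N ∩ G2 N ⊆ {ω : Ω | ∃ s, μ s ≥ bp s ∧ μhat N ω s ≤ bm s + q s * τ N * σ s}ᶜ := by
      rintro ω ⟨hg1, hg2⟩ ⟨s, hs1, hs2⟩
      have σpos : 0 < σ s := lt_of_lt_of_le ho (hσo s)
      have τpos := hτpos N
      have hτσ : 0 < τ N * σ s := mul_pos τpos σpos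
      have hqs : q s ≤ Q := (abs_le.mp (hqQ s)).2
      have hμδ : bm s + δ ≤ μ s := (hgap' s).trans hs1
      by_cases hcase : ηt < |μ s - bm s|
      · have hsign := hZ1 ω N bm (Or.inl rfl) s hcase
        rw [Real.sign_of_pos (by linarith : (0:ℝ) < μ s - bm s), mul_one] at hsign
        have hZb : -M1 * τ N ≤ Z N ω s := (le_div_iff₀ τpos).mp (hg1 s)
        have hτ1 : τ N * (M1 + Q + 1) < K := by
          have h4 : τ N < K / (M1 + Q + 1) := h3.trans_le (min_le_left _ _)
          exact (lt_div_iff₀ (by linarith)).mp h4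
        nlinarith [mul_pos σpos τpos, mul_lt_mul_of_pos_left hτ1 σpos,
          mul_le_mul_of_nonneg_left hZb σpos.le,
          mul_le_mul_of_nonneg_right hqs hτσ.le]
      · push_neg at hcase
        have hGb : -M2 * (τ N * σ s) ≤ μhat N ω s - μ s := (le_div_iff₀ hτσ).mp (hg2 s hcase)
        have hτ2 : τ N * ((M2 + Q + 1) * O') < δ := by
          have h4 : τ N < δ / ((M2 + Q + 1) * O') := h3.trans_le (min_le_right _ _)
          exact (lt_div_iff₀ (by positivity)).mp h4
        nlinarith [mul_pos τpos σpos, mul_pos τpos hO'pos,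
          mul_le_mul_of_nonneg_right hqs hτσ.le,
          mul_le_mul_of_nonneg_left (hσO' s) (mul_nonneg (by linarith : (0:ℝ) ≤ M2 + Q) τpos.le)]
    have hsub : {ω : Ω | ∃ s, μ s ≥ bp s ∧ μhat N ω s ≤ bm s + q s * τ N * σ s} ⊆
        (G1 N)ᶜ ∪ (G2 N)ᶜ := by
      rw [← Set.compl_inter]
      exact Set.subset_compl_comm.mp hsub'
    have := outer_le' P hsub
    simp only [outerProb] at this ⊢
    linarith
  · apply limsup_eq_zero_of_le' (fun N => ENNReal.toReal_nonneg)
    intro ε hε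
    obtain ⟨M1, hM1, hL1⟩ := hZ2 (ε/4) (by linarith)
    obtain ⟨M2, hM2, hL2⟩ := htightp (ε/4) (by linarith)
    set G1 : ℕ → Set Ω := fun N => {ω : Ω | ∀ s, Z N ω s / τ N ≥ -M1} with hG1def
    set G2 : ℕ → Set Ω := fun N => {ω : Ω |
        ∀ s, |μ s - bp s| ≤ ηt → (μhat N ω s - μ s) / (τ N * σ s) ≤ M2} with hG2def
    have hcob1 : IsBoundedUnder (· ≥ ·) atTop (fun N => innerProb P (G1 N)) :=
      isBoundedUnder_of ⟨0, fun N => innerProb_nonneg' P _⟩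
    have hcob2 : IsBoundedUnder (· ≥ ·) atTop (fun N => innerProb P (G2 N)) :=
      isBoundedUnder_of ⟨0, fun N => innerProb_nonneg' P _⟩
    have hev1 : ∀ᶠ N in atTop, 1 - ε/2 < innerProb P (G1 N) :=
      eventually_lt_of_lt_liminf (lt_of_lt_of_le (by linarith) hL1) hcob1
    have hev2 : ∀ᶠ N in atTop, 1 - ε/2 < innerProb P (G2 N) :=
      eventually_lt_of_lt_liminf (lt_of_lt_of_le (by linarith) hL2) hcob2
    have hc1 : (0:ℝ) < K / (M1 + Q + 1) := by positivity
    have hc2 : (0:ℝ) < δ / ((M2 + Q + 1) * O') := by positivity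
    have hτev : ∀ᶠ N in atTop, τ N < min (K / (M1 + Q + 1)) (δ / ((M2 + Q + 1) * O')) :=
      hτ0.eventually_lt_const (lt_min hc1 hc2)
    filter_upwards [hev1, hev2, hτev] with N h1 h2 h3
    have hsub' : G1 N ∩ G2 N ⊆ {ω : Ω | ∃ s, μ s ≤ bm s ∧ μhat N ω s ≥ bp s - q s * τ N * σ s}ᶜ := by
      rintro ω ⟨hg1, hg2⟩ ⟨s, hs1, hs2⟩
      have σpos : 0 < σ s := lt_of_lt_of_le ho (hσo s)
      have τpos := hτpos N
      have hτσ : 0 < τ N * σ s := mul_pos τpos σpos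
      have hqs : q s ≤ Q := (abs_le.mp (hqQ s)).2
      have hμδ : μ s ≤ bp s - δ := by have := hgap' s; linarith
      by_cases hcase : ηt < |μ s - bp s|
      · have hsign := hZ1 ω N bp (Or.inr rfl) s hcase
        rw [Real.sign_of_neg (by linarith : μ s - bp s < 0), mul_neg_one] at hsign
        have hZb : -M1 * τ N ≤ Z N ω s := (le_div_iff₀ τpos).mp (hg1 s)
        have hτ1 : τ N * (M1 + Q + 1) < K := by
          have h4 : τ N < K / (M1 + Q + 1) := h3.trans_le (min_le_left _ _)
          exact (lt_div_iff₀ (by linarith)).mp h4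
        nlinarith [mul_pos σpos τpos, mul_lt_mul_of_pos_left hτ1 σpos,
          mul_le_mul_of_nonneg_left hZb σpos.le,
          mul_le_mul_of_nonneg_right hqs hτσ.le]
      · push_neg at hcase
        have hGb : μhat N ω s - μ s ≤ M2 * (τ N * σ s) := (div_le_iff₀ hτσ).mp (hg2 s hcase)
        have hτ2 : τ N * ((M2 + Q + 1) * O') < δ := by
          have h4 : τ N < δ / ((M2 + Q + 1) * O') := h3.trans_le (min_le_right _ _)
          exact (lt_div_iff₀ (by positivity)).mp h4
        nlinarith [mul_pos τpos σpos, mul_pos τpos hO'pos,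
          mul_le_mul_of_nonneg_right hqs hτσ.le,
          mul_le_mul_of_nonneg_left (hσO' s) (mul_nonneg (by linarith : (0:ℝ) ≤ M2 + Q) τpos.le)]
    have hsub : {ω : Ω | ∃ s, μ s ≤ bm s ∧ μhat N ω s ≥ bp s - q s * τ N * σ s} ⊆
        (G1 N)ᶜ ∪ (G2 N)ᶜ := by
      rw [← Set.compl_inter]
      exact Set.subset_compl_comm.mp hsub'
    have := outer_le' P hsub
    simp only [outerProb] at this ⊢
    linarith
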